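/- arXiv:1405.7688 — 3 statements merged into one kernel-verified Lean document; each statement's English description precedes it below -/
import Mathlib

section
/- Let q ∈ ℝⁿ with n ≥ 2 and let S ⊆ ℝⁿ be contained in the affine subspace {x : x₁ = x₂ = ⋯ = x_{n-s} = 0} with n - s ≥ 2. Suppose q lies outside the hyperplane {x₂ = 0}. Let B be an open ball containing q. Then the set G of points x ∈ B such that the segment from q to x does not intersect S is dense in B. -/
open Set Metric

theorem dense_radial_lines_missing_codim_two
    (n s : ℕ) (hn : 2 ≤ n) (hcodim : 2 ≤ n - s)
    (S : Set (Fin n → ℝ))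
    (hS : S ⊆ {x : Fin n → ℝ | ∀ i : Fin n, (i : ℕ) < n - s → x i = 0})
    (q : Fin n → ℝ) (hq : q ⟨1, lt_of_lt_of_le one_lt_two hn⟩ ≠ 0)
    (c : Fin n → ℝ) (r : ℝ) (hr : 0 < r) (hqB : q ∈ Metric.ball c r) :
    Metric.ball c r ⊆
      closure {x ∈ Metric.ball c r | Disjoint (segment ℝ q x) S} := by
  have h0n : (0 : ℕ) < n := by omega
  have h1n : (1 : ℕ) < n := by omega
  set i0 : Fin n := ⟨0, h0n⟩
  set i1 : Fin n := ⟨1, h1n⟩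
  have hq1 : q i1 ≠ 0 := hq
  set D : Set (Fin n → ℝ) := {x | q i1 * x i0 - q i0 * x i1 ≠ 0} with hD
  -- D is open
  have hDopen : IsOpen D := by
    have hcont : Continuous fun x : Fin n → ℝ => q i1 * x i0 - q i0 * x i1 := by
      fun_prop
    exact isOpen_ne_fun hcont continuous_const
  -- D is dense
  have hDdense : Dense D := by
    intro x
    rw [Metric.mem_closure_iff]
    intro ε hε
    by_cases hx : q i1 * x i0 - q i0 * x i1 ≠ 0
    · exact ⟨x, hx, by simpa using hε⟩
    · push_neg at hx
      refine ⟨Function.update x i0 (x i0 + ε / 2), ?_, ?_⟩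
      · simp only [hD, mem_setOf_eq, Function.update_self]
        have : Function.update x i0 (x i0 + ε / 2) i1 = x i1 := by
          apply Function.update_of_ne
          simp [i0, i1, Fin.ext_iff]
        rw [this]
        have : q i1 * (x i0 + ε / 2) - q i0 * x i1
            = (q i1 * x i0 - q i0 * x i1) + q i1 * (ε / 2) := by ring
        rw [this, hx, zero_add]
        positivity
      · rw [dist_pi_lt_iff hε]
        intro i
        by_cases hi : i = i0
        · subst hi
          simp only [Function.update_self, Real.dist_eq]
          rw [abs_sub_comm, add_sub_cancel_left, abs_of_pos (by positivity)]
          linarith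
        · rw [Function.update_of_ne hi]
          simpa using hε
  -- good set contains ball ∩ D
  have hsub : Metric.ball c r ∩ D ⊆
      {x ∈ Metric.ball c r | Disjoint (segment ℝ q x) S} := by
    rintro x ⟨hxB, hxD⟩
    refine ⟨hxB, ?_⟩
    rw [Set.disjoint_left]
    rintro p ⟨a, b, ha, hb, hab, hp⟩ hpS
    have hp0 : p i0 = 0 := hS hpS i0 (by simp only [i0]; omega)
    have hp1 : p i1 = 0 := hS hpS i1 (by simp only [i1]; omega)
    have e0 : a * q i0 + b * x i0 = 0 := by
      have := congrFun hp i0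
      simpa [Pi.add_apply, Pi.smul_apply, smul_eq_mul, hp0] using this
    have e1 : a * q i1 + b * x i1 = 0 := by
      have := congrFun hp i1
      simpa [Pi.add_apply, Pi.smul_apply, smul_eq_mul, hp1] using this
    have hbne : b ≠ 0 := by
      intro hb0
      subst hb0
      have ha1 : a = 1 := by linarith
      rw [ha1] at e1
      simp at e1
      exact hq1 e1
    have key : b * (q i1 * x i0 - q i0 * x i1) = 0 := by
      linear_combination q i1 * e0 - q i0 * e1
    rcases mul_eq_zero.mp key with h | h
    · exact hbne h
    · exact hxD h
  intro x hx
  have := hDdense.open_subset_closure_inter Metric.isOpen_ball hx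
  exact closure_mono hsub this
end

section
/- Let u : [0,1] → ℝ be nonnegative with u² of class C¹, and suppose (u²)'(t) ≤ 2A(t)·u(t) + B(t)·u(t)² for continuous nonnegative functions A, B, with u(0) = 0. If u is C¹ wherever it is positive, then u(t) ≤ ∫₀ᵗ A(t')·exp(∫_{t'}^t B(t'')/2 dt'') dt' for all t ∈ [0,1]. -/
/-!
Put `φ t = ∫₀ᵗ B/2` and `z = u e^{-φ}`. The integrating factor absorbs the quadratic term:
`(z²)' = ((u²)' - B u²) e^{-2φ} ≤ 2 (A e^{-φ}) |z|`. For such a `z`, compare `z²` with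
`v²`, where `v = |z 0| + ∫ A e^{-φ} + ε (1 + t)`: where `z² = v²` we have `|z| = v > 0`,
so `(z²)' ≤ 2 A e^{-φ} v < (v²)'`, and the fencing theorem gives `|z| ≤ v`; let `ε → 0`.
Working with `z²` rather than `z` avoids differentiating `u` where it vanishes.
-/

open Set Real intervalIntegral Topology MeasureTheory

theorem continuousOn_integral_of_continuousOn {c : ℝ → ℝ} {a b : ℝ}
    (hc : ContinuousOn c (Icc a b)) : ContinuousOn (fun y => ∫ t in a..y, c t) (Icc a b) := by
  rcases le_or_gt a b with hab | hab
  · simpa [uIcc_of_le hab] using continuousOn_primitive_interval'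
      (hc.intervalIntegrable_of_Icc (μ := volume) hab) left_mem_uIcc
  · simp [Icc_eq_empty_of_lt hab]

theorem integral_hasDerivWithinAt_Ici_of_continuousOn {c : ℝ → ℝ} {a b x : ℝ}
    (hc : ContinuousOn c (Icc a b)) (hx : x ∈ Ico a b) :
    HasDerivWithinAt (fun y => ∫ t in a..y, c t) (c x) (Ici x) x := by
  have hIcc : Icc a b ∈ 𝓝[>] x := Icc_mem_nhdsGT_of_mem hx
  exact integral_hasDerivWithinAt_right (t := Ioi x)
    ((hc.mono (Icc_subset_Icc_right hx.2.le)).intervalIntegrable_of_Icc hx.1)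
    ((hc.stronglyMeasurableAtFilter_nhdsWithin measurableSet_Icc x).filter_mono
      (nhdsWithin_le_of_mem hIcc))
    ((hc x (Ico_subset_Icc_self hx)).mono_of_mem_nhdsWithin hIcc)

theorem abs_le_abs_add_integral_add_of_hasDerivWithinAt_sq {f g c : ℝ → ℝ} {a b ε : ℝ}
    (hf : ContinuousOn (fun x => f x ^ 2) (Icc a b))
    (hg : ∀ x ∈ Ico a b, HasDerivWithinAt (fun y => f y ^ 2) (g x) (Ici x) x)
    (hc : ContinuousOn c (Icc a b)) (hc_nonneg : ∀ x ∈ Icc a b, 0 ≤ c x)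
    (hgc : ∀ x ∈ Ico a b, g x ≤ 2 * c x * |f x|) (hε : 0 < ε) :
    ∀ x ∈ Icc a b, |f x| ≤ |f a| + (∫ t in a..x, c t) + ε * (1 + (x - a)) := by
  set v : ℝ → ℝ := fun y => |f a| + (∫ t in a..y, c t) + ε * (1 + (y - a))
  have hv_pos : ∀ x ∈ Icc a b, 0 < v x := fun x hx => by
    have : 0 ≤ ∫ t in a..x, c t :=
      integral_nonneg hx.1 fun t ht => hc_nonneg t ⟨ht.1, ht.2.trans hx.2⟩
    have : 0 ≤ x - a := sub_nonneg.2 hx.1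
    positivity
  have hv : ContinuousOn v (Icc a b) :=
    (continuousOn_const.add (continuousOn_integral_of_continuousOn hc)).add (by fun_prop)
  have hv' : ∀ x ∈ Ico a b, HasDerivWithinAt v (c x + ε) (Ici x) x := fun x hx =>
    (((integral_hasDerivWithinAt_Ici_of_continuousOn hc hx).const_add |f a|).add
      ((((hasDerivWithinAt_id x (Ici x)).sub_const a).const_add 1).const_mul ε)).congr_deriv
      (by simp)
  have hsq : ∀ x ∈ Icc a b, f x ^ 2 ≤ v x ^ 2 := by
    refine image_le_of_deriv_right_lt_deriv_boundary' hf hg ?_ (hv.pow 2)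
      (fun x hx => (hv' x hx).pow 2) fun x hx hfv => ?_
    · have hva : v a = |f a| + ε := by simp [v]
      rw [hva, ← sq_abs]
      gcongr
      linarith
    · have hvx := hv_pos x (Ico_subset_Icc_self hx)
      have hfv : |f x| = v x := (sq_eq_sq₀ (abs_nonneg _) hvx.le).1 (by rwa [sq_abs])
      calc g x ≤ 2 * c x * v x := hfv ▸ hgc x hx
        _ < _ := by
          simp only [Nat.cast_ofNat, Nat.add_one_sub_one, pow_one]
          nlinarith
  exact fun x hx => abs_le_of_sq_le_sq (hsq x hx) (hv_pos x hx).le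

theorem abs_le_abs_add_integral_of_hasDerivWithinAt_sq {f g c : ℝ → ℝ} {a b : ℝ}
    (hf : ContinuousOn (fun x => f x ^ 2) (Icc a b))
    (hg : ∀ x ∈ Ico a b, HasDerivWithinAt (fun y => f y ^ 2) (g x) (Ici x) x)
    (hc : ContinuousOn c (Icc a b)) (hc_nonneg : ∀ x ∈ Icc a b, 0 ≤ c x)
    (hgc : ∀ x ∈ Ico a b, g x ≤ 2 * c x * |f x|) :
    ∀ x ∈ Icc a b, |f x| ≤ |f a| + ∫ t in a..x, c t := by
  intro x hx
  have hlen : 0 < 1 + (x - a) := by linarith [hx.1]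
  refine le_of_forall_pos_le_add fun δ hδ => ?_
  have := abs_le_abs_add_integral_add_of_hasDerivWithinAt_sq hf hg hc hc_nonneg hgc
    (div_pos hδ hlen) x hx
  rwa [div_mul_cancel₀ δ hlen.ne'] at this

theorem hasDerivWithinAt_sq_mul_exp_neg {u φ : ℝ → ℝ} {w β x : ℝ} {s : Set ℝ}
    (hu : HasDerivWithinAt (fun t => u t ^ 2) w s x) (hφ : HasDerivWithinAt φ β s x) :
    HasDerivWithinAt (fun t => (u t * exp (-φ t)) ^ 2)
      ((w - 2 * β * u x ^ 2) * exp (-φ x) ^ 2) s x := by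
  have h : HasDerivWithinAt (fun t => u t ^ 2 * exp (-φ t) ^ 2) _ s x :=
    hu.mul (hφ.neg.exp.pow 2)
  simp only [← mul_pow] at h
  refine h.congr_deriv ?_
  simp only [Nat.cast_ofNat, Pi.neg_apply, Nat.add_one_sub_one, pow_one, mul_neg]
  ring

theorem sub_mul_exp_neg_sq_le_mul_abs {w a b u p : ℝ} (hw : w ≤ 2 * a * u + b * u ^ 2)
    (ha : 0 ≤ a) :
    (w - 2 * (b / 2) * u ^ 2) * exp (-p) ^ 2 ≤ 2 * (a * exp (-p)) * |u * exp (-p)| := by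
  have hwu : w - 2 * (b / 2) * u ^ 2 ≤ 2 * a * |u| := by nlinarith [le_abs_self u]
  calc (w - 2 * (b / 2) * u ^ 2) * exp (-p) ^ 2 ≤ 2 * a * |u| * exp (-p) ^ 2 := by gcongr
    _ = 2 * (a * exp (-p)) * |u * exp (-p)| := by
      rw [abs_mul, abs_of_pos (exp_pos _)]
      ring

theorem integral_mul_exp_integral {A β : ℝ → ℝ} {a b : ℝ}
    (hβ : IntervalIntegrable β volume a b) :
    ∫ s in a..b, A s * exp (∫ r in s..b, β r)
      = exp (∫ r in a..b, β r) * ∫ s in a..b, A s * exp (-∫ r in a..s, β r) := by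
  rw [← intervalIntegral.integral_const_mul]
  refine integral_congr fun s hs => ?_
  rw [← integral_interval_sub_left hβ (hβ.mono_set (uIcc_subset_uIcc_left hs)),
    sub_eq_add_neg, exp_add]
  ring

theorem sqrt_differential_inequality_general
    (u w A B : ℝ → ℝ)
    (husq : ∀ t ∈ Icc (0:ℝ) 1, HasDerivAt (fun t => (u t) ^ 2) (w t) t)
    (hA : ContinuousOn A (Icc (0:ℝ) 1)) (hA_nonneg : ∀ t ∈ Icc (0:ℝ) 1, 0 ≤ A t)
    (hB : ContinuousOn B (Icc (0:ℝ) 1))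
    (hineq : ∀ t ∈ Icc (0:ℝ) 1, w t ≤ 2 * A t * u t + B t * (u t) ^ 2)
    (hu0 : u 0 = 0) :
    ∀ t ∈ Icc (0:ℝ) 1,
      u t ≤ ∫ t' in (0:ℝ)..t, A t' * Real.exp (∫ t'' in t'..t, B t'' / 2) := by
  intro t ht
  set φ : ℝ → ℝ := fun s => ∫ r in (0:ℝ)..s, B r / 2
  have hφ : ContinuousOn φ (Icc 0 1) := continuousOn_integral_of_continuousOn (hB.div_const 2)
  have hu_sq : ContinuousOn (fun x => u x ^ 2) (Icc 0 1) :=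
    fun x hx => (husq x hx).continuousAt.continuousWithinAt
  have hz_sq : ContinuousOn (fun x => (u x * exp (-φ x)) ^ 2) (Icc 0 1) :=
    (hu_sq.mul (hφ.neg.rexp.pow 2)).congr fun x _ => mul_pow _ _ 2
  have hz_sq_deriv (x : ℝ) (hx : x ∈ Ico 0 1) := hasDerivWithinAt_sq_mul_exp_neg
    (husq x (Ico_subset_Icc_self hx)).hasDerivWithinAt
    (integral_hasDerivWithinAt_Ici_of_continuousOn (hB.div_const 2) hx)
  have hz := abs_le_abs_add_integral_of_hasDerivWithinAt_sq (c := fun x => A x * exp (-φ x))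
    hz_sq hz_sq_deriv (hA.mul hφ.neg.rexp) (fun x hx => mul_nonneg (hA_nonneg x hx) (exp_pos _).le)
    (fun x hx => sub_mul_exp_neg_sq_le_mul_abs (hineq x (Ico_subset_Icc_self hx))
      (hA_nonneg x (Ico_subset_Icc_self hx))) t ht
  rw [hu0, zero_mul, abs_zero, zero_add] at hz
  rw [integral_mul_exp_integral
    (((hB.div_const 2).mono (Icc_subset_Icc_right ht.2)).intervalIntegrable_of_Icc ht.1)]
  calc u t ≤ exp (φ t) * |u t * exp (-φ t)| := by
        rw [abs_mul, abs_of_pos (exp_pos _), mul_left_comm, ← exp_add, add_neg_cancel, exp_zero,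
          mul_one]
        exact le_abs_self _
    _ ≤ _ := by gcongr

theorem sqrt_differential_inequality
    (u w A B : ℝ → ℝ)
    (hu_nonneg : ∀ t ∈ Icc (0:ℝ) 1, 0 ≤ u t)
    (husq : ∀ t ∈ Icc (0:ℝ) 1, HasDerivAt (fun t => (u t) ^ 2) (w t) t)
    (hwcont : ContinuousOn w (Icc (0:ℝ) 1))
    (hA : ContinuousOn A (Icc (0:ℝ) 1)) (hA_nonneg : ∀ t ∈ Icc (0:ℝ) 1, 0 ≤ A t)
    (hB : ContinuousOn B (Icc (0:ℝ) 1)) (hB_nonneg : ∀ t ∈ Icc (0:ℝ) 1, 0 ≤ B t)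
    (hineq : ∀ t ∈ Icc (0:ℝ) 1, w t ≤ 2 * A t * u t + B t * (u t) ^ 2)
    (hu0 : u 0 = 0)
    (huC1 : ContDiffOn ℝ 1 u {t ∈ Icc (0:ℝ) 1 | 0 < u t}) :
    ∀ t ∈ Icc (0:ℝ) 1,
      u t ≤ ∫ t' in (0:ℝ)..t, A t' * Real.exp (∫ t'' in t'..t, B t'' / 2) :=
  sqrt_differential_inequality_general u w A B husq hA hA_nonneg hB hineq hu0
end

section
/- Consider ℝ³ with coordinates (a, b, c) identified with the frame (ξ₁, ξ₂, ξ₃) of the Kostant bundle over an isothermal chart with conformal factor λ and Gaussian curvature κ. The matrix of the curvature operator R^K_{∂x ∂y} in this frame is the 3×3 matrix with all entries zero except the (3,1) entry equal to −κ_x·λ and the (3,2) entry equal to −κ_y·λ. In particular, if the differential dκ never vanishes, then R^K_{∂x ∂y} has rank 1 at every point. -/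
noncomputable def pd (i : Fin 2) (f : ℝ × ℝ → ℝ) (p : ℝ × ℝ) : ℝ :=
  fderiv ℝ f p (if i = 0 then ((1:ℝ), (0:ℝ)) else ((0:ℝ), (1:ℝ)))

lemma pd_hasFDerivAt {f : ℝ × ℝ → ℝ} {D : ℝ × ℝ →L[ℝ] ℝ} {p : ℝ × ℝ}
    (h : HasFDerivAt f D p) (i : Fin 2) :
    pd i f p = D (if i = 0 then ((1:ℝ), (0:ℝ)) else ((0:ℝ), (1:ℝ))) := by
  rw [pd, h.fderiv]

lemma pd_congr {f g : ℝ × ℝ → ℝ} (h : ∀ q, f q = g q) (i : Fin 2) (p : ℝ × ℝ) :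
    pd i f p = pd i g p := by
  have : f = g := funext h
  rw [this]

lemma pd_const (i : Fin 2) (c : ℝ) (p : ℝ × ℝ) : pd i (fun _ => c) p = 0 := by
  simp [pd]

lemma pd_neg {f : ℝ × ℝ → ℝ} (i : Fin 2) (p : ℝ × ℝ) :
    pd i (fun q => -(f q)) p = -pd i f p := by
  simp [pd, fderiv_neg]

lemma pd_mul {f g : ℝ × ℝ → ℝ} {p : ℝ × ℝ} (hf : DifferentiableAt ℝ f p)
    (hg : DifferentiableAt ℝ g p) (i : Fin 2) :
    pd i (fun q => f q * g q) p = pd i f p * g p + f p * pd i g p := by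
  rw [pd, fderiv_fun_mul hf hg]
  simp [pd]
  ring

lemma pd_div {f g : ℝ × ℝ → ℝ} {p : ℝ × ℝ} (hf : DifferentiableAt ℝ f p)
    (hg : DifferentiableAt ℝ g p) (hg0 : g p ≠ 0) (i : Fin 2) :
    pd i (fun q => f q / g q) p
      = (pd i f p * g p - f p * pd i g p) / (g p) ^ 2 := by
  have hinv : HasFDerivAt (fun q => (g q)⁻¹) ((-(g p ^ 2)⁻¹) • fderiv ℝ g p) p :=
    (hasDerivAt_inv hg0).comp_hasFDerivAt p hg.hasFDerivAt
  have hmul := hf.hasFDerivAt.mul hinv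
  have : pd i (fun q => f q / g q) p = pd i (fun q => f q * (g q)⁻¹) p := by
    apply pd_congr; intro q; rw [div_eq_mul_inv]
  rw [this, pd_hasFDerivAt (f := fun q => f q * (g q)⁻¹) hmul]
  simp [pd]
  field_simp
  ring

lemma pd_log {f : ℝ × ℝ → ℝ} {p : ℝ × ℝ} (hf : DifferentiableAt ℝ f p)
    (h0 : f p ≠ 0) (i : Fin 2) :
    pd i (fun q => Real.log (f q)) p = pd i f p / f p := by
  have h : HasFDerivAt (fun q => Real.log (f q)) ((f p)⁻¹ • fderiv ℝ f p) p :=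
    (Real.hasDerivAt_log h0).comp_hasFDerivAt p hf.hasFDerivAt
  rw [pd_hasFDerivAt h]
  simp [pd]
  ring

lemma contDiff_pd {f : ℝ × ℝ → ℝ} {n : ℕ} (hf : ContDiff ℝ ((n : WithTop ℕ∞) + 1) f)
    (i : Fin 2) : ContDiff ℝ (n : WithTop ℕ∞) (pd i f) :=
  (hf.fderiv_right le_rfl).clm_apply contDiff_const

lemma pd_pd_symm {f : ℝ × ℝ → ℝ} (hf : ContDiff ℝ 2 f) (p : ℝ × ℝ) :
    pd 0 (pd 1 f) p = pd 1 (pd 0 f) p := by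
  have hd : Differentiable ℝ f := hf.differentiable (by norm_num)
  have hder : ∀ y, HasFDerivAt f (fderiv ℝ f y) y := fun y => (hd y).hasFDerivAt
  have hF : ContDiff ℝ 1 (fderiv ℝ f) := hf.fderiv_right (by norm_num)
  have hFd : DifferentiableAt ℝ (fderiv ℝ f) p :=
    (hF.differentiable one_ne_zero) p
  have hsymm := second_derivative_symmetric hder hFd.hasFDerivAt
  have key : ∀ (v : ℝ × ℝ) (i : Fin 2),
      pd i (fun q => fderiv ℝ f q v) p
        = fderiv ℝ (fderiv ℝ f) p (if i = 0 then ((1:ℝ),(0:ℝ)) else (0,1)) v := by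
    intro v i
    rw [pd, fderiv_clm_apply hFd (differentiableAt_const v)]
    simp
  have h1 : pd 0 (pd 1 f) p = pd 0 (fun q => fderiv ℝ f q ((0:ℝ),(1:ℝ))) p := by
    apply pd_congr; intro q; simp [pd]
  have h2 : pd 1 (pd 0 f) p = pd 1 (fun q => fderiv ℝ f q ((1:ℝ),(0:ℝ))) p := by
    apply pd_congr; intro q; simp [pd]
  rw [h1, h2, key, key]
  simpa using hsymm ((1:ℝ),(0:ℝ)) ((0:ℝ),(1:ℝ))

lemma differentiableAt_div' {f g : ℝ × ℝ → ℝ} {p : ℝ × ℝ} (hf : DifferentiableAt ℝ f p)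
    (hg : DifferentiableAt ℝ g p) (h0 : g p ≠ 0) :
    DifferentiableAt ℝ (fun q => f q / g q) p := by
  simp only [div_eq_mul_inv]
  exact hf.mul (hg.inv h0)

noncomputable def Ax (lam kappa : ℝ × ℝ → ℝ) (p : ℝ × ℝ) : Matrix (Fin 3) (Fin 3) ℝ :=
  !![pd 0 lam p / (2 * lam p),   pd 1 lam p / (2 * lam p),  0;
     -(pd 1 lam p) / (2 * lam p), pd 0 lam p / (2 * lam p), -1;
     0,                          kappa p * lam p,           0]

noncomputable def Ay (lam kappa : ℝ × ℝ → ℝ) (p : ℝ × ℝ) : Matrix (Fin 3) (Fin 3) ℝ :=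
  !![pd 1 lam p / (2 * lam p),  -(pd 0 lam p) / (2 * lam p), 1;
     pd 0 lam p / (2 * lam p),   pd 1 lam p / (2 * lam p),   0;
     -(kappa p * lam p),         0,                          0]

noncomputable def RK (lam kappa : ℝ × ℝ → ℝ) (p : ℝ × ℝ) : Matrix (Fin 3) (Fin 3) ℝ :=
  Matrix.of fun i j =>
    pd 0 (fun q => Ay lam kappa q i j) p - pd 1 (fun q => Ax lam kappa q i j) p
      + (Ax lam kappa p * Ay lam kappa p - Ay lam kappa p * Ax lam kappa p) i j

set_option maxHeartbeats 1000000 in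
theorem kostant_curvature_matrix
    (lam kappa : ℝ × ℝ → ℝ) (hlam : ContDiff ℝ (⊤ : ℕ∞) lam) (hpos : ∀ p, 0 < lam p)
    (hkappa : ∀ p, kappa p =
      -(pd 0 (pd 0 fun q => Real.log (lam q)) p
        + pd 1 (pd 1 fun q => Real.log (lam q)) p) / (2 * lam p)) :
    ∀ p : ℝ × ℝ,
      RK lam kappa p =
        !![0, 0, 0;
           0, 0, 0;
           -(pd 0 kappa p) * lam p, -(pd 1 kappa p) * lam p, 0] ∧
      ((pd 0 kappa p, pd 1 kappa p) ≠ (0, 0) → (RK lam kappa p).rank = 1) := by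
  have hne : ∀ q, lam q ≠ 0 := fun q => (hpos q).ne'
  have hld : Differentiable ℝ lam :=
    (hlam.of_le (by exact_mod_cast (le_top : (1 : ℕ∞) ≤ ⊤) : (1 : WithTop ℕ∞) ≤ ((⊤ : ℕ∞) : WithTop ℕ∞))).differentiable one_ne_zero
  have hu : ∀ i : Fin 2, ContDiff ℝ 2 (pd i lam) := by
    intro i
    have : ContDiff ℝ ((2 : ℕ) : WithTop ℕ∞) (pd i lam) :=
      contDiff_pd (hlam.of_le (WithTop.coe_le_coe.mpr le_top)) i
    exact_mod_cast this
  have hud : ∀ (i : Fin 2) q, DifferentiableAt ℝ (pd i lam) q := fun i q =>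
    ((hu i).differentiable (by norm_num)) q
  have hS : ∀ i : Fin 2, ContDiff ℝ 2 fun q => pd i lam q / lam q := fun i =>
    (hu i).div (hlam.of_le (WithTop.coe_le_coe.mpr le_top)) hne
  have hSd : ∀ (i j : Fin 2) q, DifferentiableAt ℝ (pd j fun q => pd i lam q / lam q) q := by
    intro i j q
    have : ContDiff ℝ ((1 : ℕ) : WithTop ℕ∞) (pd j fun q => pd i lam q / lam q) := by
      apply contDiff_pd
      exact_mod_cast hS i
    exact (this.differentiable (by norm_num)) q
  have hlog : ∀ j : Fin 2, (pd j fun q => Real.log (lam q)) = fun q => pd j lam q / lam q :=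
    fun j => funext fun q => pd_log (hld q) (hne q) j
  have hkfun : kappa = fun p =>
      -(pd 0 (fun q => pd 0 lam q / lam q) p + pd 1 (fun q => pd 1 lam q / lam q) p)
        / (2 * lam p) := by
    funext p
    rw [hkappa p, hlog 0, hlog 1]
  have hkd : ∀ q, DifferentiableAt ℝ kappa q := by
    rw [hkfun]
    intro q
    exact differentiableAt_div' (((hSd 0 0 q).add (hSd 1 1 q)).neg) ((hld q).const_mul 2)
      (mul_ne_zero two_ne_zero (hne q))
  have hk0 : ∀ p, kappa p =
      -((pd 0 (pd 0 lam) p * lam p - pd 0 lam p * pd 0 lam p) / lam p ^ 2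
        + (pd 1 (pd 1 lam) p * lam p - pd 1 lam p * pd 1 lam p) / lam p ^ 2) / (2 * lam p) := by
    intro p
    rw [hkfun]
    simp only
    rw [pd_div (hud 0 p) (hld p) (hne p) 0, pd_div (hud 1 p) (hld p) (hne p) 1]
  intro p
  have hk1 : kappa p = (pd 0 lam p ^ 2 + pd 1 lam p ^ 2
      - (pd 0 (pd 0 lam) p + pd 1 (pd 1 lam) p) * lam p) / (2 * lam p ^ 3) := by
    rw [hk0 p]; field_simp; ring
  have hg2 : ∀ i : Fin 2, pd i (fun q => 2 * lam q) p = 2 * pd i lam p := by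
    intro i
    rw [pd, fderiv_const_mul (hld p)]
    simp [pd]
  have hgd : DifferentiableAt ℝ (fun q => 2 * lam q) p := (hld p).const_mul 2
  have hg0 : (2 : ℝ) * lam p ≠ 0 := mul_ne_zero two_ne_zero (hne p)
  have hpdE : ∀ j i : Fin 2, pd i (fun q => pd j lam q / (2 * lam q)) p
      = (pd i (pd j lam) p * (2 * lam p) - pd j lam p * (2 * pd i lam p)) / (2 * lam p) ^ 2 := by
    intro j i
    rw [pd_div (hud j p) hgd hg0 i, hg2]
  have hpdEn : ∀ j i : Fin 2, pd i (fun q => -(pd j lam q) / (2 * lam q)) p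
      = -((pd i (pd j lam) p * (2 * lam p) - pd j lam p * (2 * pd i lam p)) / (2 * lam p) ^ 2) := by
    intro j i
    have e : (fun q => -(pd j lam q) / (2 * lam q)) = fun q => -(pd j lam q / (2 * lam q)) := by
      funext q; ring
    rw [e, pd_neg, hpdE]
  have hpdk : ∀ i : Fin 2, pd i (fun q => kappa q * lam q) p
      = pd i kappa p * lam p + kappa p * pd i lam p := fun i => pd_mul (hkd p) (hld p) i
  have hpdkn : ∀ i : Fin 2, pd i (fun q => -(kappa q * lam q)) p
      = -(pd i kappa p * lam p + kappa p * pd i lam p) := by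
    intro i; rw [pd_neg, hpdk]
  have hsymm : pd 0 (pd 1 lam) p = pd 1 (pd 0 lam) p :=
    pd_pd_symm (by exact_mod_cast hlam.of_le ((WithTop.coe_le_coe.mpr le_top) : ((2:ℕ) : WithTop ℕ∞) ≤ ((⊤ : ℕ∞) : WithTop ℕ∞))) p
  have eAy00 : (fun q => Ay lam kappa q 0 0) = fun q => pd 1 lam q / (2 * lam q) := by
    funext q; simp [Ay, Matrix.vecHead, Matrix.vecTail]
  have eAy01 : (fun q => Ay lam kappa q 0 1) = fun q => -(pd 0 lam q) / (2 * lam q) := by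
    funext q; simp [Ay, Matrix.vecHead, Matrix.vecTail]
  have eAy02 : (fun q => Ay lam kappa q 0 2) = fun _ => (1:ℝ) := by
    funext q; simp [Ay, Matrix.vecHead, Matrix.vecTail]
  have eAy10 : (fun q => Ay lam kappa q 1 0) = fun q => pd 0 lam q / (2 * lam q) := by
    funext q; simp [Ay, Matrix.vecHead, Matrix.vecTail]
  have eAy11 : (fun q => Ay lam kappa q 1 1) = fun q => pd 1 lam q / (2 * lam q) := by
    funext q; simp [Ay, Matrix.vecHead, Matrix.vecTail]
  have eAy12 : (fun q => Ay lam kappa q 1 2) = fun _ => (0:ℝ) := by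
    funext q; simp [Ay, Matrix.vecHead, Matrix.vecTail]
  have eAy20 : (fun q => Ay lam kappa q 2 0) = fun q => -(kappa q * lam q) := by
    funext q; simp [Ay, Matrix.vecHead, Matrix.vecTail]
  have eAy21 : (fun q => Ay lam kappa q 2 1) = fun _ => (0:ℝ) := by
    funext q; simp [Ay, Matrix.vecHead, Matrix.vecTail]
  have eAy22 : (fun q => Ay lam kappa q 2 2) = fun _ => (0:ℝ) := by
    funext q; simp [Ay, Matrix.vecHead, Matrix.vecTail]
  have eAx00 : (fun q => Ax lam kappa q 0 0) = fun q => pd 0 lam q / (2 * lam q) := by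
    funext q; simp [Ax, Matrix.vecHead, Matrix.vecTail]
  have eAx01 : (fun q => Ax lam kappa q 0 1) = fun q => pd 1 lam q / (2 * lam q) := by
    funext q; simp [Ax, Matrix.vecHead, Matrix.vecTail]
  have eAx02 : (fun q => Ax lam kappa q 0 2) = fun _ => (0:ℝ) := by
    funext q; simp [Ax, Matrix.vecHead, Matrix.vecTail]
  have eAx10 : (fun q => Ax lam kappa q 1 0) = fun q => -(pd 1 lam q) / (2 * lam q) := by
    funext q; simp [Ax, Matrix.vecHead, Matrix.vecTail]
  have eAx11 : (fun q => Ax lam kappa q 1 1) = fun q => pd 0 lam q / (2 * lam q) := by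
    funext q; simp [Ax, Matrix.vecHead, Matrix.vecTail]
  have eAx12 : (fun q => Ax lam kappa q 1 2) = fun _ => (-1:ℝ) := by
    funext q; simp [Ax, Matrix.vecHead, Matrix.vecTail]
  have eAx20 : (fun q => Ax lam kappa q 2 0) = fun _ => (0:ℝ) := by
    funext q; simp [Ax, Matrix.vecHead, Matrix.vecTail]
  have eAx21 : (fun q => Ax lam kappa q 2 1) = fun q => kappa q * lam q := by
    funext q; simp [Ax, Matrix.vecHead, Matrix.vecTail]
  have eAx22 : (fun q => Ax lam kappa q 2 2) = fun _ => (0:ℝ) := by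
    funext q; simp [Ax, Matrix.vecHead, Matrix.vecTail]
  have hM : RK lam kappa p =
      !![0, 0, 0; 0, 0, 0;
         -(pd 0 kappa p) * lam p, -(pd 1 kappa p) * lam p, 0] := by
    ext i j
    fin_cases i <;> fin_cases j
    · show RK lam kappa p 0 0 = _
      simp only [RK, Matrix.of_apply, Matrix.sub_apply, Matrix.mul_apply, Fin.sum_univ_three]
      rw [eAy00, eAx00, hpdE 1 0, hpdE 0 1, hsymm]
      simp [Ax, Ay, Matrix.vecHead, Matrix.vecTail]
      field_simp
      ring
    · show RK lam kappa p 0 1 = _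
      simp only [RK, Matrix.of_apply, Matrix.sub_apply, Matrix.mul_apply, Fin.sum_univ_three]
      rw [eAy01, eAx01, hpdEn 0 0, hpdE 1 1]
      simp [Ax, Ay, Matrix.vecHead, Matrix.vecTail]
      rw [hk1]
      field_simp [hne p]
      ring
    · show RK lam kappa p 0 2 = _
      simp only [RK, Matrix.of_apply, Matrix.sub_apply, Matrix.mul_apply, Fin.sum_univ_three]
      rw [eAy02, eAx02, pd_const, pd_const]
      simp [Ax, Ay, Matrix.vecHead, Matrix.vecTail]
      ring
    · show RK lam kappa p 1 0 = _
      simp only [RK, Matrix.of_apply, Matrix.sub_apply, Matrix.mul_apply, Fin.sum_univ_three]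
      rw [eAy10, eAx10, hpdE 0 0, hpdEn 1 1]
      simp [Ax, Ay, Matrix.vecHead, Matrix.vecTail]
      rw [hk1]
      field_simp [hne p]
      ring
    · show RK lam kappa p 1 1 = _
      simp only [RK, Matrix.of_apply, Matrix.sub_apply, Matrix.mul_apply, Fin.sum_univ_three]
      rw [eAy11, eAx11, hpdE 1 0, hpdE 0 1, hsymm]
      simp [Ax, Ay, Matrix.vecHead, Matrix.vecTail]
      field_simp
      ring
    · show RK lam kappa p 1 2 = _
      simp only [RK, Matrix.of_apply, Matrix.sub_apply, Matrix.mul_apply, Fin.sum_univ_three]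
      rw [eAy12, eAx12, pd_const, pd_const]
      simp [Ax, Ay, Matrix.vecHead, Matrix.vecTail]
      ring
    · show RK lam kappa p 2 0 = _
      simp only [RK, Matrix.of_apply, Matrix.sub_apply, Matrix.mul_apply, Fin.sum_univ_three]
      rw [eAy20, eAx20, hpdkn 0, pd_const]
      simp [Ax, Ay, Matrix.vecHead, Matrix.vecTail]
      field_simp [hne p]
      ring
    · show RK lam kappa p 2 1 = _
      simp only [RK, Matrix.of_apply, Matrix.sub_apply, Matrix.mul_apply, Fin.sum_univ_three]
      rw [eAy21, eAx21, hpdk 1, pd_const]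
      simp [Ax, Ay, Matrix.vecHead, Matrix.vecTail]
      field_simp [hne p]
      ring
    · show RK lam kappa p 2 2 = _
      simp only [RK, Matrix.of_apply, Matrix.sub_apply, Matrix.mul_apply, Fin.sum_univ_three]
      rw [eAy22, eAx22, pd_const, pd_const]
      simp [Ax, Ay, Matrix.vecHead, Matrix.vecTail]
  refine ⟨hM, ?_⟩
  intro hne0
  rw [hM]
  set a : ℝ := -(pd 0 kappa p) * lam p with ha
  set b : ℝ := -(pd 1 kappa p) * lam p with hb
  have hab : ¬(a = 0 ∧ b = 0) := by
    rintro ⟨h1, h2⟩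
    apply hne0
    have e1 : pd 0 kappa p = 0 := by
      rcases mul_eq_zero.mp h1 with h | h
      · linarith [neg_eq_zero.mp h]
      · exact absurd h (hne p)
    have e2 : pd 1 kappa p = 0 := by
      rcases mul_eq_zero.mp h2 with h | h
      · linarith [neg_eq_zero.mp h]
      · exact absurd h (hne p)
    simp [e1, e2]
  have hfact : (!![0, 0, 0; 0, 0, 0; a, b, 0] : Matrix (Fin 3) (Fin 3) ℝ)
      = (Matrix.of ![![(0:ℝ)], ![0], ![1]] : Matrix (Fin 3) (Fin 1) ℝ)
        * (Matrix.of ![![a, b, 0]] : Matrix (Fin 1) (Fin 3) ℝ) := by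
    ext i j
    fin_cases i <;> fin_cases j <;> simp [Matrix.mul_apply, Matrix.vecHead, Matrix.vecTail]
  have hle : (!![0, 0, 0; 0, 0, 0; a, b, 0] : Matrix (Fin 3) (Fin 3) ℝ).rank ≤ 1 := by
    rw [hfact]
    refine le_trans (Matrix.rank_mul_le_left _ _) ?_
    simpa using Matrix.rank_le_card_width
      (Matrix.of ![![(0:ℝ)], ![0], ![1]] : Matrix (Fin 3) (Fin 1) ℝ)
  have hvne : (!![0, 0, 0; 0, 0, 0; a, b, 0] : Matrix (Fin 3) (Fin 3) ℝ).mulVecLin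
      ![a, b, 0] ≠ 0 := by
    intro h
    have h2 := congrFun h 2
    simp [Matrix.mulVecLin_apply, Matrix.mulVec, dotProduct, Fin.sum_univ_three,
      Matrix.vecHead, Matrix.vecTail] at h2
    have ha0 : a = 0 := by nlinarith [sq_nonneg a, sq_nonneg b]
    have hb0 : b = 0 := by nlinarith [sq_nonneg a, sq_nonneg b]
    exact hab ⟨ha0, hb0⟩
  have hne0' : (!![0, 0, 0; 0, 0, 0; a, b, 0] : Matrix (Fin 3) (Fin 3) ℝ).rank ≠ 0 := by
    intro h0
    rw [Matrix.rank, Submodule.finrank_eq_zero, LinearMap.range_eq_bot] at h0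
    exact hvne (by rw [h0]; rfl)
  omega
end
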